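/- For all natural numbers s ≥ 1 and q ≥ 0: F_s(x)·L_{s(q+1)}(x) − L_s(x)·F_{s(q+1)}(x) = 2·(-1)^{s+1}·F_{sq}(x), as an identity of polynomials in x. -/

import Mathlib

open Polynomial

/-- Fibonacci polynomials in `ℤ[X]`. -/
noncomputable def fibPoly : ℕ → Polynomial ℤ
  | 0 => 0
  | 1 => 1
  | n + 2 => X * fibPoly (n + 1) + fibPoly n

/-- Lucas polynomials in `ℤ[X]`. -/
noncomputable def lucasPoly : ℕ → Polynomial ℤ
  | 0 => 2
  | 1 => X
  | n + 2 => X * lucasPoly (n + 1) + lucasPoly n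

/-! For fixed `a`, both sides of `fibPoly_mul_lucasPoly_add_sub` satisfy the Fibonacci
recurrence in `b`, so it suffices to check `b = 0` (trivial) and `b = 1`, the
Cassini-type identity `fibPoly_mul_lucasPoly_succ_sub`. -/

theorem fibPoly_add_two (n : ℕ) : fibPoly (n + 2) = X * fibPoly (n + 1) + fibPoly n := rfl

theorem lucasPoly_add_two (n : ℕ) :
    lucasPoly (n + 2) = X * lucasPoly (n + 1) + lucasPoly n := rfl

theorem fibPoly_mul_lucasPoly_succ_sub (a : ℕ) :
    fibPoly a * lucasPoly (a + 1) - lucasPoly a * fibPoly (a + 1) =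
      2 * (-1 : ℤ[X]) ^ (a + 1) := by
  induction a with
  | zero => simp [fibPoly, lucasPoly]
  | succ a ih =>
    rw [fibPoly_add_two, lucasPoly_add_two, pow_succ]
    linear_combination (-1 : ℤ[X]) * ih

theorem fibPoly_mul_lucasPoly_add_sub (a b : ℕ) :
    fibPoly a * lucasPoly (a + b) - lucasPoly a * fibPoly (a + b) =
      2 * (-1 : ℤ[X]) ^ (a + 1) * fibPoly b := by
  induction b using Nat.twoStepInduction with
  | zero => simp [fibPoly, mul_comm]
  | one => simpa [fibPoly] using fibPoly_mul_lucasPoly_succ_sub a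
  | more b ih₀ ih₁ =>
    rw [← add_assoc, fibPoly_add_two, lucasPoly_add_two, fibPoly_add_two]
    linear_combination X * ih₁ + ih₀

theorem stmt_12_general (s q : ℕ) :
    fibPoly s * lucasPoly (s * (q + 1)) - lucasPoly s * fibPoly (s * (q + 1)) =
      2 * (-1 : Polynomial ℤ) ^ (s + 1) * fibPoly (s * q) := by
  rw [mul_add_one, add_comm (s * q), fibPoly_mul_lucasPoly_add_sub]

theorem stmt_12 (s q : ℕ) (hs : 1 ≤ s) :
    fibPoly s * lucasPoly (s * (q + 1)) - lucasPoly s * fibPoly (s * (q + 1)) =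
      2 * (-1 : Polynomial ℤ) ^ (s + 1) * fibPoly (s * q) :=
  stmt_12_general s q
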